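/- In Δ_s(n), an element covers exactly one element (is join-irreducible) if and only if it has the form (0,...,0, n-k, 0,...,0, k) with n-k in some position t ∈ {0,...,s-2} and k in the last position, for some k ∈ {0,...,n-1}. -/

import Mathlib

/-!
Prefix sums identify dominance with the pointwise order on `Fin s → ℕ`, and `psum` is injective.
Moving one unit of `a` from a nonzero coordinate `j < s - 1` to `j + 1` lowers exactly one prefix
sum by one, so the result is covered by `a`. Conversely, if `b` is covered by `a`, then at the first
coordinate `j` where they differ `b j < a j`, and the move at `j` lies between `b` and `a`, so it is
`b`. Hence the lower covers of `a` correspond to the nonzero coordinates of `a` other than the last,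
and `a` covers exactly one element iff there is exactly one such coordinate.
-/

def psum {s : ℕ} (a : Fin s → ℕ) (j : Fin s) : ℕ :=
  ∑ i : Fin s, if i ≤ j then a i else 0

def Dom {s : ℕ} (a b : Fin s → ℕ) : Prop := ∀ j : Fin s, psum a j ≤ psum b j

def SDom {s : ℕ} (a b : Fin s → ℕ) : Prop := Dom a b ∧ a ≠ b

def CoversWC {s : ℕ} (n : ℕ) (a b : Fin s → ℕ) : Prop :=
  SDom a b ∧ ∀ c : Fin s → ℕ, (∑ i, c i = n) → SDom a c → SDom c b → False

open Finset Function

lemma exists_forall_lt_eq_of_ne {ι β : Type*} [LinearOrder ι] [WellFoundedLT ι] {a b : ι → β}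
    (h : a ≠ b) : ∃ j, a j ≠ b j ∧ ∀ i < j, a i = b i := by
  obtain ⟨i, hi⟩ := Function.ne_iff.1 h
  obtain ⟨j, hj, hmin⟩ := wellFounded_lt.has_min {i | a i ≠ b i} ⟨i, hi⟩
  exact ⟨j, hj, fun i hij => by_contra fun hne => hmin i hne hij⟩

section PrefixSums

variable {s : ℕ}

lemma psum_eq_sum_Iic (a : Fin s → ℕ) (j : Fin s) : psum a j = ∑ i ∈ Iic j, a i := by
  rw [psum, ← sum_filter]
  congr 1
  ext i
  simp

lemma psum_eq_sum_Iio_add (a : Fin s → ℕ) (j : Fin s) :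
    psum a j = ∑ i ∈ Iio j, a i + a j := by
  rw [psum_eq_sum_Iic, ← Iio_insert, sum_insert (by simp), add_comm]

lemma psum_eq_sum {a : Fin s → ℕ} {j : Fin s} (hj : s ≤ j.val + 1) : psum a j = ∑ i, a i :=
  sum_congr rfl fun i _ => if_pos (Fin.le_def.2 (by omega))

lemma psum_add (a b : Fin s → ℕ) : psum (a + b) = psum a + psum b := by
  funext j
  simp only [psum_eq_sum_Iic, Pi.add_apply, sum_add_distrib]

lemma psum_single (k j : Fin s) : psum (Pi.single k 1) j = if k ≤ j then 1 else 0 := by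
  rw [psum_eq_sum_Iic, sum_pi_single']
  simp

lemma psum_add_eq_psum_add_of_forall_lt_eq {a b : Fin s → ℕ} {j : Fin s}
    (h : ∀ i < j, a i = b i) : psum a j + b j = psum b j + a j := by
  rw [psum_eq_sum_Iio_add, psum_eq_sum_Iio_add, sum_congr rfl fun i hi => h i (mem_Iio.1 hi)]
  ring

lemma psum_injective : Injective (psum (s := s)) := by
  intro a b h
  by_contra hne
  obtain ⟨j, hj, hprefix⟩ := exists_forall_lt_eq_of_ne hne
  have := psum_add_eq_psum_add_of_forall_lt_eq hprefix
  rw [h] at this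
  omega

lemma sdom_iff_psum_lt {a b : Fin s → ℕ} : SDom a b ↔ psum a < psum b := by
  rw [lt_iff_le_and_ne, psum_injective.ne_iff]
  rfl

end PrefixSums

section LowerShift

variable {s : ℕ}

def lowerShift (a : Fin s → ℕ) (j : Fin s) : Fin s → ℕ :=
  fun i => a i - (if i = j then 1 else 0) + (if i.val = j.val + 1 then 1 else 0)

def shiftableIndices (a : Fin s → ℕ) : Set (Fin s) := {j | j.val + 1 < s ∧ 0 < a j}

variable {a : Fin s → ℕ} {j : Fin s}

lemma lowerShift_add_single (hj : j.val + 1 < s) (ha : 0 < a j) :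
    lowerShift a j + Pi.single j 1 = a + Pi.single ⟨j.val + 1, hj⟩ 1 := by
  funext i
  rcases eq_or_ne i j with rfl | hij
  · have hne : i ≠ ⟨i.val + 1, hj⟩ := Fin.ne_of_val_ne (Nat.ne_add_one _)
    simp only [Pi.add_apply, Pi.single_eq_same, Pi.single_eq_of_ne hne, lowerShift, ↓reduceIte,
      if_neg (Nat.ne_add_one _)]
    omega
  · simp only [Pi.add_apply, lowerShift, Pi.single_apply, Fin.ext_iff]
    split_ifs <;> omega

lemma sum_lowerShift (hj : j ∈ shiftableIndices a) : ∑ i, lowerShift a j i = ∑ i, a i := by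
  have := congrArg (fun f => ∑ i, f i) (lowerShift_add_single hj.1 hj.2)
  simpa [sum_add_distrib] using this

lemma psum_lowerShift (hj : j ∈ shiftableIndices a) :
    psum (lowerShift a j) = update (psum a) j (psum a j - 1) := by
  funext i
  have key := congrFun (congrArg psum (lowerShift_add_single hj.1 hj.2)) i
  simp only [psum_add, Pi.add_apply, psum_single, Fin.le_def] at key
  rcases eq_or_ne i j with rfl | hij
  · rw [update_self]
    split_ifs at key <;> omega
  · rw [update_of_ne hij]
    split_ifs at key <;> omega

lemma psum_lowerShift_covBy (hj : j ∈ shiftableIndices a) : psum (lowerShift a j) ⋖ psum a := by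
  rw [psum_lowerShift hj, Pi.covBy_iff]
  refine ⟨j, ?_, fun i hi => update_of_ne hi _ _⟩
  have := psum_eq_sum_Iio_add a j
  rw [update_self, Nat.covBy_iff_add_one_eq]
  have := hj.2
  omega

lemma lowerShift_coversWC (n : ℕ) (hj : j ∈ shiftableIndices a) : CoversWC n (lowerShift a j) a :=
  ⟨sdom_iff_psum_lt.2 (psum_lowerShift_covBy hj).lt, fun _ _ hlc hca =>
    (psum_lowerShift_covBy hj).2 (sdom_iff_psum_lt.1 hlc) (sdom_iff_psum_lt.1 hca)⟩

lemma lowerShift_injOn : Set.InjOn (lowerShift a) (shiftableIndices a) := by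
  intro j hj k hk h
  by_contra hne
  have := congrFun (congrArg psum h) j
  rw [psum_lowerShift hj, psum_lowerShift hk, update_self, update_of_ne hne,
    psum_eq_sum_Iio_add] at this
  have := hj.2
  omega

lemma eq_lowerShift_of_coversWC {n : ℕ} {b : Fin s → ℕ} (ha : ∑ i, a i = n) (hb : ∑ i, b i = n)
    (h : CoversWC n b a) : ∃ j ∈ shiftableIndices a, b = lowerShift a j := by
  obtain ⟨hba, hmin⟩ := h
  obtain ⟨j, hne, hprefix⟩ := exists_forall_lt_eq_of_ne hba.2
  have hj := psum_add_eq_psum_add_of_forall_lt_eq hprefix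
  have hle := (sdom_iff_psum_lt.1 hba).le
  have hlt : b j < a j := by
    have : psum b j ≤ psum a j := hle j
    omega
  have hjs : j.val + 1 < s := by
    by_contra hlast
    rw [psum_eq_sum (not_lt.1 hlast), psum_eq_sum (not_lt.1 hlast)] at hj
    omega
  have hshift : j ∈ shiftableIndices a := ⟨hjs, by omega⟩
  have hb_dom : Dom b (lowerShift a j) := by
    intro i
    rw [psum_lowerShift hshift]
    rcases eq_or_ne i j with rfl | hij
    · rw [update_self]
      omega
    · rw [update_of_ne hij]
      exact hle i
  refine ⟨j, hshift, by_contra fun hne' => hmin (lowerShift a j) ?_ ⟨hb_dom, hne'⟩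
    (lowerShift_coversWC n hshift).1⟩
  rw [sum_lowerShift hshift, ha]

lemma setOf_coversWC_eq_image {n : ℕ} (ha : ∑ i, a i = n) :
    {b | ∑ i, b i = n ∧ CoversWC n b a} = lowerShift a '' shiftableIndices a := by
  ext b
  constructor
  · rintro ⟨hb, hcov⟩
    obtain ⟨j, hj, rfl⟩ := eq_lowerShift_of_coversWC ha hb hcov
    exact ⟨j, hj, rfl⟩
  · rintro ⟨j, hj, rfl⟩
    exact ⟨(sum_lowerShift hj).trans ha, lowerShift_coversWC n hj⟩

end LowerShift

lemma exists_shiftableIndices_eq_singleton_iff {s n : ℕ} {a : Fin s → ℕ} (ha : ∑ i, a i = n) :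
    (∃ t, shiftableIndices a = {t}) ↔ ∃ k t : ℕ, k < n ∧ t + 1 < s ∧
      a = fun i : Fin s => if i.val = t then n - k else if i.val = s - 1 then k else 0 := by
  constructor
  · rintro ⟨t, ht⟩
    obtain ⟨hts, hat⟩ : t ∈ shiftableIndices a := ht ▸ rfl
    let last : Fin s := ⟨s - 1, by omega⟩
    have hzero : ∀ i, i ≠ t ∧ i ≠ last → a i = 0 := by
      rintro i ⟨hit, hil⟩
      have : i.val ≠ s - 1 := fun h => hil (Fin.ext h)
      by_contra h0
      exact hit (ht ▸ ⟨by omega, Nat.pos_of_ne_zero h0⟩ : i ∈ ({t} : Set (Fin s)))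
    have htl : t ≠ last := Fin.ne_of_val_ne (by simp [last]; omega)
    rw [Fintype.sum_eq_add t last htl hzero] at ha
    refine ⟨a last, t, by omega, hts, funext fun i => ?_⟩
    split_ifs with hit hil
    · rw [Fin.ext hit]
      omega
    · rw [show i = last from Fin.ext hil]
    · exact hzero i ⟨Fin.ne_of_val_ne hit, Fin.ne_of_val_ne hil⟩
  · rintro ⟨k, t, hk, hts, rfl⟩
    refine ⟨⟨t, by omega⟩, Set.ext fun j => ?_⟩
    simp only [shiftableIndices, Set.mem_ofPred_eq, Set.mem_singleton_iff, Fin.ext_iff]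
    split_ifs <;> omega

/-- an element of Δ_s(n) is join-irreducible (covers exactly one
element) iff it has the form (0,…,0, n−k, 0,…,0, k) with n−k in position
t ∈ {0,…,s−2} and k ∈ {0,…,n−1} in the last position. -/
theorem join_irreducible_iff (s n : ℕ) (a : Fin s → ℕ) (ha : ∑ i, a i = n) :
    Set.ncard {b : Fin s → ℕ | (∑ i, b i = n) ∧ CoversWC n b a} = 1 ↔
      ∃ k t : ℕ, k < n ∧ t + 1 < s ∧
        a = fun i : Fin s => if i.val = t then n - k else if i.val = s - 1 then k else 0 := by
  rw [setOf_coversWC_eq_image ha, lowerShift_injOn.ncard_image, Set.ncard_eq_one,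
    exists_shiftableIndices_eq_singleton_iff ha]
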